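/- A decision tree t over domain D is consistent with a game sample S_G (meaning D(t) is consistent with S_G) if and only if the flipped tree t' (with all leaf labels negated) is consistent with the Horn sample S_H obtained from S_G by the translation of Algorithm 1. -/

import Mathlib

/-! Flipping every leaf of `t` complements `D(t)`. For `A = Dᶜ`, each Horn clause of the
translation is the contrapositive of the game constraint it comes from: `d ∈ H` becomes
`d ∉ A`, a disjunction over `H` becomes a conjunction over `A`, and a universal constraint
splits into one clause per conjunct. -/

inductive DTree (D : Type*) where
  | leaf (b : Bool)
  | node (p : D → Bool) (l r : DTree D)

def DTree.eval {D : Type*} : DTree D → D → Bool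
  | .leaf b, _ => b
  | .node p l r, d => if p d then l.eval d else r.eval d

def DTree.setOf {D : Type*} (t : DTree D) : Set D := {d | t.eval d = true}

def DTree.flip {D : Type*} : DTree D → DTree D
  | .leaf b => .leaf (!b)
  | .node p l r => .node p l.flip r.flip

def GameConsistent {D : Type*} (H : Set D) (Pos Neg : List D)
    (Ex Un : List (D × List D)) : Prop :=
  (∀ d ∈ Pos, d ∈ H) ∧ (∀ d ∈ Neg, d ∉ H) ∧
  (∀ p ∈ Ex, p.1 ∈ H → ∃ d ∈ p.2, d ∈ H) ∧
  (∀ p ∈ Un, p.1 ∈ H → ∀ d ∈ p.2, d ∈ H)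

def HornConsistent {D : Type*} (A : Set D) (S : List (List D × Option D)) : Prop :=
  ∀ c ∈ S, (∀ d ∈ c.1, d ∈ A) →
    match c.2 with
    | some d => d ∈ A
    | none => False

def toHornSample {D : Type*} (Pos Neg : List D) (Ex Un : List (D × List D)) :
    List (List D × Option D) :=
  (Pos.map fun d => ([d], none)) ++
  (Neg.map fun d => ([], some d)) ++
  (Ex.map fun p => (p.2, some p.1)) ++
  (Un.flatMap fun p => p.2.map fun di => ([di], some p.1))

namespace DTree

variable {D : Type*}

theorem eval_flip (t : DTree D) (d : D) : t.flip.eval d = !t.eval d := by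
  induction t with
  | leaf b => rfl
  | node p l r ihl ihr => by_cases hp : p d <;> simp [flip, eval, hp, ihl, ihr]

theorem setOf_flip (t : DTree D) : t.flip.setOf = t.setOfᶜ := by
  ext d
  simp [setOf, eval_flip]

end DTree

namespace HornConsistent

variable {D : Type*} {A : Set D}

theorem append_iff {S T : List (List D × Option D)} :
    HornConsistent A (S ++ T) ↔ HornConsistent A S ∧ HornConsistent A T := by
  simp only [HornConsistent, List.mem_append, or_imp, forall_and]

theorem map_iff {α : Type*} {f : α → List D × Option D} {l : List α} :
    HornConsistent A (l.map f) ↔ ∀ x ∈ l, HornConsistent A [f x] := by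
  simp [HornConsistent]

theorem flatMap_iff {α : Type*} {f : α → List (List D × Option D)} {l : List α} :
    HornConsistent A (l.flatMap f) ↔ ∀ x ∈ l, HornConsistent A (f x) := by
  simp only [HornConsistent, List.mem_flatMap, forall_exists_index, and_imp]
  exact ⟨fun h x hx c hc => h c x hx hc, fun h c x hx hc => h x hx c hc⟩

theorem singleton_iff {c : List D × Option D} :
    HornConsistent A [c] ↔ (∀ d ∈ c.1, d ∈ A) →
      match c.2 with
      | some d => d ∈ A
      | none => False := by
  simp [HornConsistent]

end HornConsistent

open HornConsistent in
theorem gameConsistent_iff_hornConsistent_compl {D : Type*} (H : Set D) (Pos Neg : List D)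
    (Ex Un : List (D × List D)) :
    GameConsistent H Pos Neg Ex Un ↔ HornConsistent Hᶜ (toHornSample Pos Neg Ex Un) := by
  simp only [toHornSample, append_iff, map_iff, flatMap_iff, singleton_iff, GameConsistent,
    and_assoc]
  refine and_congr ?pos (and_congr ?neg (and_congr ?ex ?un))
  case pos => simp
  case neg => simp
  case ex =>
    refine forall₂_congr fun p _ => ?_
    rw [← not_imp_not]
    simp
  case un =>
    refine forall₂_congr fun p _ => ?_
    simp only [Set.mem_compl_iff, List.mem_singleton, forall_eq, not_imp_not]
    exact ⟨fun h x hx hp => h hp x hx, fun h hp x hx => h x hx hp⟩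

theorem stmt_17 {D : Type*} (t : DTree D) (Pos Neg : List D)
    (Ex Un : List (D × List D)) :
    GameConsistent t.setOf Pos Neg Ex Un ↔
      HornConsistent t.flip.setOf (toHornSample Pos Neg Ex Un) := by
  rw [DTree.setOf_flip]
  exact gameConsistent_iff_hornConsistent_compl t.setOf Pos Neg Ex Un
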